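/- arXiv:1406.2260 — 2 statements merged into one kernel-verified Lean document; each statement's English description precedes it below -/
import Mathlib

section
/- Let A, B be skew-Hermitian n×n complex matrices and let u, v : [0,T] → ℝ be piecewise constant controls. Denote by X^u(t,0) the associated propagator of ẋ = (A + u(t)B)x. Then for every ψ, ‖X^u(T,0)ψ − X^v(T,0)ψ‖ ≤ ‖B‖ · ‖u − v‖_{L¹([0,T])} · ‖ψ‖. -/
/-!
Each factor `exp (τ • (A + u • B))` is unitary, because `A + u • B` is skew-adjoint. A difference of
two products of unitaries telescopes, `a P - b Q = a (P - Q) + (a - b) Q`, so it is bounded by the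
sum of the differences of the factors. For one factor, Duhamel's formula
`d/ds (exp (s X) exp ((t - s) Y)) = exp (s X) (X - Y) exp ((t - s) Y)` has a derivative of norm
`‖X - Y‖`, whence `‖exp (t X) - exp (t Y)‖ ≤ t ‖X - Y‖ = t |u - v| ‖B‖`.
-/

open scoped BigOperators

/-- The propagator associated to a piecewise constant control on a common
refinement `s = t₀ < … < t_m = T` with durations `τⱼ = tⱼ - tⱼ₋₁` and values
`uⱼ`: the ordered product of the exponentials `exp(τⱼ (A + uⱼ B))`. -/
noncomputable def pcPropagator {n : ℕ}
    (A B : EuclideanSpace ℂ (Fin n) →L[ℂ] EuclideanSpace ℂ (Fin n))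
    {m : ℕ} (τ u : Fin m → ℝ) :
    EuclideanSpace ℂ (Fin n) →L[ℂ] EuclideanSpace ℂ (Fin n) :=
  ((List.ofFn fun j => NormedSpace.exp (((τ j : ℂ)) • (A + (u j : ℂ) • B)))).prod

open NormedSpace

lemma norm_prod_ofFn_sub_prod_ofFn_le {R : Type*} [NormedRing R] [StarRing R] [CStarRing R]
    {m : ℕ} {a b : Fin m → R} (ha : ∀ j, a j ∈ unitary R) (hb : ∀ j, b j ∈ unitary R) :
    ‖(List.ofFn a).prod - (List.ofFn b).prod‖ ≤ ∑ j, ‖a j - b j‖ := by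
  induction m with
  | zero => simp
  | succ m ih =>
    set P := (List.ofFn fun j => a j.succ).prod
    set Q := (List.ofFn fun j => b j.succ).prod
    have hQ : Q ∈ unitary R :=
      Submonoid.list_prod_mem _ (by simpa using fun j : Fin m => hb j.succ)
    have hPQ : ‖P - Q‖ ≤ ∑ j : Fin m, ‖a j.succ - b j.succ‖ :=
      ih (fun j => ha j.succ) (fun j => hb j.succ)
    rw [List.ofFn_succ, List.ofFn_succ, List.prod_cons, List.prod_cons]
    calc ‖a 0 * P - b 0 * Q‖ = ‖a 0 * (P - Q) + (a 0 - b 0) * Q‖ := by noncomm_ring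
      _ ≤ ‖P - Q‖ + ‖a 0 - b 0‖ := by
        grw [norm_add_le, CStarRing.norm_mem_unitary_mul _ (ha 0),
          CStarRing.norm_mul_mem_unitary _ hQ]
      _ ≤ ∑ j, ‖a j - b j‖ := by
        rw [Fin.sum_univ_succ, add_comm]
        gcongr

section CStarAlgebra

variable {𝔸 : Type*} [CStarAlgebra 𝔸]

lemma ofReal_smul_mem_skewAdjoint {x : 𝔸} (hx : x ∈ skewAdjoint 𝔸) (r : ℝ) :
    (r : ℂ) • x ∈ skewAdjoint 𝔸 := by
  rw [skewAdjoint.mem_iff, star_smul, Complex.star_def, Complex.conj_ofReal,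
    skewAdjoint.mem_iff.mp hx, smul_neg]

lemma exp_ofReal_smul_mem_unitary {x : 𝔸} (hx : x ∈ skewAdjoint 𝔸) (r : ℝ) :
    exp ((r : ℂ) • x) ∈ unitary 𝔸 :=
  letI : NormedAlgebra ℚ 𝔸 := .restrictScalars ℚ ℂ 𝔸
  exp_mem_unitary_of_mem_skewAdjoint (ofReal_smul_mem_skewAdjoint hx r)

lemma norm_exp_ofReal_smul_sub_le {x y : 𝔸} (hx : x ∈ skewAdjoint 𝔸) (hy : y ∈ skewAdjoint 𝔸)
    {t : ℝ} (ht : 0 ≤ t) :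
    ‖exp ((t : ℂ) • x) - exp ((t : ℂ) • y)‖ ≤ t * ‖x - y‖ := by
  set g : ℝ → 𝔸 := fun s => exp (s • x) * exp ((t - s) • y)
  set g' : ℝ → 𝔸 := fun s => exp (s • x) * (x - y) * exp ((t - s) • y)
  have hg : ∀ s : ℝ, HasDerivAt g (g' s) s := by
    intro s
    have hX := hasDerivAt_exp_smul_const x s
    have hY := (hasDerivAt_exp_smul_const' y (t - s)).scomp s ((hasDerivAt_id s).const_sub t)
    refine (hX.mul hY).congr_deriv ?_
    simp only [g', Function.comp_apply, neg_one_smul]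
    noncomm_ring
  have hg' : ∀ s ∈ Set.Ico 0 t, ‖g' s‖ ≤ ‖x - y‖ := fun s _ => by
    have hXs := exp_ofReal_smul_mem_unitary hx s
    have hYs := exp_ofReal_smul_mem_unitary hy (t - s)
    rw [Complex.coe_smul] at hXs hYs
    rw [CStarRing.norm_mul_mem_unitary _ hYs, CStarRing.norm_mem_unitary_mul _ hXs]
  have := norm_image_sub_le_of_norm_deriv_le_segment' (fun s _ => (hg s).hasDerivWithinAt)
    hg' t (Set.right_mem_Icc.2 ht)
  simpa [g, mul_comm] using this

end CStarAlgebra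

theorem norm_pcPropagator_sub_le {n : ℕ}
    {A B : EuclideanSpace ℂ (Fin n) →L[ℂ] EuclideanSpace ℂ (Fin n)}
    (hA : A ∈ skewAdjoint _) (hB : B ∈ skewAdjoint _)
    {m : ℕ} {τ : Fin m → ℝ} (hτ : ∀ j, 0 ≤ τ j) (u v : Fin m → ℝ) :
    ‖pcPropagator A B τ u - pcPropagator A B τ v‖ ≤ ‖B‖ * ∑ j, τ j * |u j - v j| := by
  have hskew (r : ℝ) : A + (r : ℂ) • B ∈ skewAdjoint _ :=
    add_mem hA (ofReal_smul_mem_skewAdjoint hB r)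
  calc _ ≤ ∑ j, ‖exp ((τ j : ℂ) • (A + (u j : ℂ) • B)) - exp ((τ j : ℂ) • (A + (v j : ℂ) • B))‖ :=
        norm_prod_ofFn_sub_prod_ofFn_le (fun _ => exp_ofReal_smul_mem_unitary (hskew _) _)
          (fun _ => exp_ofReal_smul_mem_unitary (hskew _) _)
    _ ≤ ∑ j, τ j * ‖(A + (u j : ℂ) • B) - (A + (v j : ℂ) • B)‖ :=
        Finset.sum_le_sum fun j _ => norm_exp_ofReal_smul_sub_le (hskew _) (hskew _) (hτ j)
    _ = ‖B‖ * ∑ j, τ j * |u j - v j| := by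
        rw [Finset.mul_sum]
        refine Finset.sum_congr rfl fun j _ => ?_
        have hdiff : (A + (u j : ℂ) • B) - (A + (v j : ℂ) • B) = ((u j - v j : ℝ) : ℂ) • B := by
          push_cast
          module
        rw [hdiff, norm_smul, Complex.norm_real, Real.norm_eq_abs]
        ring

/-- For skew-Hermitian `A`, `B` and two piecewise constant controls `u`, `v`
given on a common refinement with durations `τⱼ ≥ 0`, the associated propagators
satisfy `‖X^u ψ - X^v ψ‖ ≤ ‖B‖ ‖u - v‖_{L¹} ‖ψ‖`, where
`‖u - v‖_{L¹} = ∑ⱼ τⱼ |uⱼ - vⱼ|`. -/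
theorem pcPropagator_L1_continuity {n : ℕ}
    (A B : EuclideanSpace ℂ (Fin n) →L[ℂ] EuclideanSpace ℂ (Fin n))
    (hA : ContinuousLinearMap.adjoint A = -A)
    (hB : ContinuousLinearMap.adjoint B = -B)
    {m : ℕ} (τ u v : Fin m → ℝ) (hτ : ∀ j, 0 ≤ τ j)
    (ψ : EuclideanSpace ℂ (Fin n)) :
    ‖pcPropagator A B τ u ψ - pcPropagator A B τ v ψ‖
      ≤ ‖B‖ * (∑ j, τ j * |u j - v j|) * ‖ψ‖ := by
  have hskew {T : EuclideanSpace ℂ (Fin n) →L[ℂ] EuclideanSpace ℂ (Fin n)}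
      (hT : ContinuousLinearMap.adjoint T = -T) : T ∈ skewAdjoint _ := by
    rwa [skewAdjoint.mem_iff, ContinuousLinearMap.star_eq_adjoint]
  calc ‖pcPropagator A B τ u ψ - pcPropagator A B τ v ψ‖
      = ‖(pcPropagator A B τ u - pcPropagator A B τ v) ψ‖ := rfl
    _ ≤ ‖pcPropagator A B τ u - pcPropagator A B τ v‖ * ‖ψ‖ := ContinuousLinearMap.le_opNorm _ _
    _ ≤ ‖B‖ * (∑ j, τ j * |u j - v j|) * ‖ψ‖ := by
        gcongr
        exact norm_pcPropagator_sub_le (hskew hA) (hskew hB) hτ u v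
end

section
/- Let A be a skew-adjoint operator with eigenbasis (φₖ) of H and B a bounded operator on H such that B(1−A)⁻¹ is compact. Then ‖(1 − π_N) B π_N‖_{L(D(A), H)} → 0 as N → ∞, where D(A) carries the graph norm. -/
/-! If `ψ` lies in the unit ball of `D(A)` for the graph norm, then `π_N ψ = R w` with
`w = π_N (1 - A) ψ` in the closed unit ball of `H`, so `B π_N ψ` stays in a fixed compact set `C`
containing `B R (closedBall 0 1)`. The maps `1 - π_N` are `1`-Lipschitz and tend to `0` pointwise,
hence uniformly on `C`. -/

open Filter Topology

theorem EquicontinuousOn.tendstoUniformlyOn_of_tendsto {ι X α : Type*} [TopologicalSpace X]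
    [UniformSpace α] {F : ι → X → α} {f : X → α} {K : Set X} {l : Filter ι}
    (hK : IsCompact K) (hF : EquicontinuousOn F K)
    (h : ∀ x ∈ K, Tendsto (F · x) l (𝓝 (f x))) :
    TendstoUniformlyOn F f l K := by
  have := (EquicontinuousOn.tendsto_uniformOnFun_iff_pi' (𝔖 := {K}) (by simpa using hK)
    (by simpa using hF) l f).2 ?_
  · exact UniformOnFun.tendsto_iff_tendstoUniformlyOn.1 this K rfl
  · rw [tendsto_pi_nhds]
    exact fun x => h x (by simpa using x.2)

section Orthonormal

variable {ι 𝕜 E : Type*} [RCLike 𝕜] [NormedAddCommGroup E] [InnerProductSpace 𝕜 E]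
  {v : ι → E}

local notation "⟪" x ", " y "⟫" => inner 𝕜 x y

theorem Orthonormal.norm_sum_smul_sq (hv : Orthonormal 𝕜 v) (s : Finset ι) (a : ι → 𝕜) :
    ‖∑ i ∈ s, a i • v i‖ ^ 2 = ∑ i ∈ s, ‖a i‖ ^ 2 := by
  rw [← inner_self_eq_norm_sq (𝕜 := 𝕜), hv.inner_sum, map_sum]
  exact Finset.sum_congr rfl fun i _ => by
    rw [RCLike.conj_mul, ← RCLike.ofReal_pow, RCLike.ofReal_re]

theorem Orthonormal.norm_sub_sum_inner_smul_le (hv : Orthonormal 𝕜 v) (s : Finset ι) (x : E) :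
    ‖x - ∑ i ∈ s, ⟪v i, x⟫ • v i‖ ≤ ‖x‖ := by
  set p := ∑ i ∈ s, ⟪v i, x⟫ • v i
  have horth : ⟪p, x - p⟫ = 0 := by
    rw [inner_sub_right, hv.inner_sum, sub_eq_zero, sum_inner]
    simp only [inner_smul_left]
  have hpyth := norm_add_sq_eq_norm_sq_add_norm_sq_of_inner_eq_zero p (x - p) horth
  rw [add_sub_cancel] at hpyth
  nlinarith [norm_nonneg p, norm_nonneg (x - p), norm_nonneg x]

end Orthonormal

theorem Complex.norm_one_sub_I_mul_sq (t : ℝ) : ‖(1 : ℂ) - I * t‖ ^ 2 = 1 + t ^ 2 := by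
  have h : (1 : ℂ) - I * t = (1 : ℝ) + (-t : ℝ) * I := by push_cast; ring
  rw [h, norm_add_mul_I, Real.sq_sqrt (by positivity)]
  ring

theorem ContinuousLinearMap.map_sum_one_sub_I_mul_smul {ι E : Type*} [NormedAddCommGroup E]
    [NormedSpace ℂ E] {v : ι → E} (lam : ι → ℝ) (R : E →L[ℂ] E)
    (hR : ∀ j, R (v j) = ((1 : ℂ) - Complex.I * lam j)⁻¹ • v j) (s : Finset ι) (c : ι → ℂ) :
    R (∑ j ∈ s, ((1 - Complex.I * lam j) * c j) • v j) = ∑ j ∈ s, c j • v j := by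
  refine (map_sum R _ s).trans (Finset.sum_congr rfl fun j _ => ?_)
  have hne : (1 : ℂ) - Complex.I * lam j ≠ 0 := by
    rw [← norm_ne_zero_iff, ← pow_ne_zero_iff two_ne_zero, Complex.norm_one_sub_I_mul_sq]
    positivity
  rw [map_smul, hR, smul_smul, mul_right_comm, mul_inv_cancel₀ hne, one_mul]

namespace HilbertBasis

section Projection

variable {𝕜 E : Type*} [RCLike 𝕜] [NormedAddCommGroup E] [InnerProductSpace 𝕜 E]
  (b : HilbertBasis ℕ 𝕜 E)

theorem toSchauderBasis_proj_apply (n : ℕ) (x : E) :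
    b.toSchauderBasis.proj n x = ∑ i ∈ Finset.range n, b.repr x i • b i := by
  simp [SchauderBasis.proj_apply, b.repr_apply_apply]

theorem norm_sub_toSchauderBasis_proj_le (n : ℕ) (x : E) :
    ‖x - b.toSchauderBasis.proj n x‖ ≤ ‖x‖ := by
  simpa [toSchauderBasis_proj_apply, b.repr_apply_apply] using
    b.orthonormal.norm_sub_sum_inner_smul_le (Finset.range n) x

theorem tendstoUniformlyOn_sub_toSchauderBasis_proj {K : Set E} (hK : IsCompact K) :
    TendstoUniformlyOn (fun n x => x - b.toSchauderBasis.proj n x) 0 atTop K := by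
  have hlip : ∀ n, LipschitzWith 1 ⇑(1 - b.toSchauderBasis.proj n : E →L[𝕜] E) := fun n => by
    simpa only [Real.toNNReal_one] using AddMonoidHomClass.lipschitz_of_bound
      (1 - b.toSchauderBasis.proj n : E →L[𝕜] E) 1 fun x => by
      simpa only [sub_apply, one_apply_eq_self, one_mul] using
        b.norm_sub_toSchauderBasis_proj_le n x
  refine EquicontinuousOn.tendstoUniformlyOn_of_tendsto hK
    ((LipschitzWith.uniformEquicontinuous _ 1 hlip).equicontinuous.equicontinuousOn K)
    fun x _ => ?_
  rw [Pi.zero_apply, ← sub_self x]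
  exact tendsto_const_nhds.sub (b.toSchauderBasis.tendsto_proj x)

end Projection

section GraphNorm

variable {ι E : Type*} [NormedAddCommGroup E] [InnerProductSpace ℂ E] (b : HilbertBasis ι ℂ E)
  (lam : ι → ℝ) (s : Finset ι) {ψ : E}

theorem norm_sum_one_sub_I_mul_repr_smul_le
    (hsum : Summable fun j => |lam j| ^ 2 * ‖b.repr ψ j‖ ^ 2)
    (hψ : ‖ψ‖ + √(∑' j, |lam j| ^ 2 * ‖b.repr ψ j‖ ^ 2) ≤ 1) :
    ‖∑ j ∈ s, ((1 - Complex.I * lam j) * b.repr ψ j) • b j‖ ≤ 1 := by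
  set T := ∑' j, |lam j| ^ 2 * ‖b.repr ψ j‖ ^ 2
  have hbessel : ∑ j ∈ s, ‖b.repr ψ j‖ ^ 2 ≤ ‖ψ‖ ^ 2 := by
    simpa only [← b.repr_apply_apply] using b.orthonormal.sum_inner_products_le ψ (s := s)
  have htail : ∑ j ∈ s, |lam j| ^ 2 * ‖b.repr ψ j‖ ^ 2 ≤ T :=
    hsum.sum_le_tsum s fun j _ => by positivity
  have hT : 0 ≤ T := tsum_nonneg fun j => by positivity
  rw [← sq_le_one_iff₀ (norm_nonneg _)]
  calc ‖∑ j ∈ s, ((1 - Complex.I * lam j) * b.repr ψ j) • b j‖ ^ 2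
      = ∑ j ∈ s, ‖b.repr ψ j‖ ^ 2 + ∑ j ∈ s, |lam j| ^ 2 * ‖b.repr ψ j‖ ^ 2 := by
        simp only [b.orthonormal.norm_sum_smul_sq, norm_mul, mul_pow,
          Complex.norm_one_sub_I_mul_sq, sq_abs, add_mul, one_mul, Finset.sum_add_distrib]
    _ ≤ ‖ψ‖ ^ 2 + T := add_le_add hbessel htail
    _ ≤ (‖ψ‖ + √T) ^ 2 := by nlinarith [Real.sq_sqrt hT, Real.sqrt_nonneg T, norm_nonneg ψ]
    _ ≤ 1 := by nlinarith [Real.sqrt_nonneg T, norm_nonneg ψ]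

theorem sum_repr_smul_mem_image_closedBall (R : E →L[ℂ] E)
    (hR : ∀ j, R (b j) = ((1 : ℂ) - Complex.I * lam j)⁻¹ • b j)
    (hsum : Summable fun j => |lam j| ^ 2 * ‖b.repr ψ j‖ ^ 2)
    (hψ : ‖ψ‖ + √(∑' j, |lam j| ^ 2 * ‖b.repr ψ j‖ ^ 2) ≤ 1) :
    ∑ j ∈ s, b.repr ψ j • b j ∈ R '' Metric.closedBall 0 1 :=
  ⟨_, mem_closedBall_zero_iff.2 (b.norm_sum_one_sub_I_mul_repr_smul_le lam s hsum hψ),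
    R.map_sum_one_sub_I_mul_smul lam hR s _⟩

end GraphNorm

end HilbertBasis

theorem galerkin_offdiagonal_vanishing_general
    {H : Type*} [NormedAddCommGroup H] [InnerProductSpace ℂ H]
    (φ : HilbertBasis ℕ ℂ H) (lam : ℕ → ℝ)
    (R B : H →L[ℂ] H)
    (hR : ∀ j, R (φ j) = ((1 : ℂ) - Complex.I * lam j)⁻¹ • φ j)
    (hcomp : IsCompactOperator (B.comp R)) :
    Tendsto (fun N : ℕ =>
      sSup {r : ℝ | ∃ ψ : H,
        Summable (fun j => |lam j| ^ 2 * ‖φ.repr ψ j‖ ^ 2) ∧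
        ‖ψ‖ + Real.sqrt (∑' j : ℕ, |lam j| ^ 2 * ‖φ.repr ψ j‖ ^ 2) ≤ 1 ∧
        r = ‖B (∑ j ∈ Finset.range N, φ.repr ψ j • φ j)
              - ∑ j ∈ Finset.range N,
                  φ.repr (B (∑ i ∈ Finset.range N, φ.repr ψ i • φ i)) j • φ j‖})
      atTop (𝓝 0) := by
  obtain ⟨C, hC, hBRC⟩ :=
    (show IsCompactOperator (B.comp R : H →ₗ[ℂ] H) from hcomp).image_closedBall_subset_compact 1
  have hunif := Metric.tendstoUniformlyOn_iff.1 (φ.tendstoUniformlyOn_sub_toSchauderBasis_proj hC)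
  refine Metric.tendsto_nhds.2 fun ε hε => ?_
  filter_upwards [hunif (ε / 2) (half_pos hε)] with N hN
  rw [Real.dist_eq, sub_zero]
  refine (abs_of_nonneg (Real.sSup_nonneg ?_)).trans_lt
    ((Real.sSup_le ?_ (half_pos hε).le).trans_lt (half_lt_self hε))
  · rintro _ ⟨ψ, -, -, rfl⟩
    exact norm_nonneg _
  · rintro _ ⟨ψ, hsum, hψ, rfl⟩
    obtain ⟨w, hw, hRw⟩ := φ.sum_repr_smul_mem_image_closedBall lam (Finset.range N) R hR hsum hψ
    have hmem : B (∑ j ∈ Finset.range N, φ.repr ψ j • φ j) ∈ C := hBRC ⟨w, hw, by simp [hRw]⟩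
    simpa only [Pi.zero_apply, dist_zero_left, φ.toSchauderBasis_proj_apply] using (hN _ hmem).le

/-- Let `A` be skew-adjoint with Hilbert basis `(φⱼ)` of eigenvectors,
`A φⱼ = i λⱼ φⱼ`, let `R = (1 - A)⁻¹` (the bounded operator with
`R φⱼ = (1 - i λⱼ)⁻¹ φⱼ`), and let `B` be a bounded operator such that
`B (1-A)⁻¹` is compact.  Denoting by `π_N` the orthogonal projection on the span
of the first `N` basis vectors, the operator norm of `(1 - π_N) B π_N` from
`D(A)` (with the graph norm `‖ψ‖ + ‖Aψ‖`, expressed through the coefficients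
`⟪φⱼ, ψ⟫`) to `H` tends to `0` as `N → ∞`. -/
theorem galerkin_offdiagonal_vanishing
    {H : Type*} [NormedAddCommGroup H] [InnerProductSpace ℂ H] [CompleteSpace H]
    (φ : HilbertBasis ℕ ℂ H) (lam : ℕ → ℝ)
    (R B : H →L[ℂ] H)
    (hR : ∀ j, R (φ j) = ((1 : ℂ) - Complex.I * lam j)⁻¹ • φ j)
    (hcomp : IsCompactOperator (B.comp R)) :
    Tendsto (fun N : ℕ =>
      sSup {r : ℝ | ∃ ψ : H,
        Summable (fun j => |lam j| ^ 2 * ‖φ.repr ψ j‖ ^ 2) ∧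
        ‖ψ‖ + Real.sqrt (∑' j : ℕ, |lam j| ^ 2 * ‖φ.repr ψ j‖ ^ 2) ≤ 1 ∧
        r = ‖B (∑ j ∈ Finset.range N, φ.repr ψ j • φ j)
              - ∑ j ∈ Finset.range N,
                  φ.repr (B (∑ i ∈ Finset.range N, φ.repr ψ i • φ i)) j • φ j‖})
      atTop (𝓝 0) :=
  galerkin_offdiagonal_vanishing_general φ lam R B hR hcomp
end
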